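/- arXiv:1705.00284 — 5 statements merged into one kernel-verified Lean document; each statement's English description precedes it below -/
import Mathlib

section
/- Let σ ≠ 0, μ > 0, δ > μ, b = σ²/2 − μ, and n the positive root of (1/2)σ²n² − b·n − δ = 0. Then δμ/n < (1/2)σ²δ − μ·(σ²/2 − μ). Consequently δ·(δ/n − μ) − (δ−μ)·(δ/n + b) < 0. -/
theorem stmt_3 (σ μ δ b n : ℝ) (hσ : σ ≠ 0) (hμ : 0 < μ) (hδ : μ < δ)
    (hb : b = σ^2/2 - μ) (hn : 0 < n)
    (hroot : σ^2/2 * n^2 - b * n - δ = 0) :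
    δ * μ / n < σ^2/2 * δ - μ * (σ^2/2 - μ) ∧
      δ * (δ/n - μ) - (δ - μ) * (δ/n + b) < 0 := by
  have hs : 0 < σ^2/2 := by positivity
  subst hb
  have hn1 : 1 < n := by nlinarith [mul_pos hs hn, mul_pos hμ hn]
  have h1 : δ * μ / n < σ^2/2 * δ - μ * (σ^2/2 - μ) := by
    rw [div_lt_iff₀ hn]
    nlinarith [mul_pos hs (mul_pos hn (sub_pos.mpr hn1))]
  refine ⟨h1, ?_⟩
  have h2 : δ * (δ/n - μ) - (δ - μ) * (δ/n + (σ^2/2 - μ))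
      = δ * μ / n - (σ^2/2 * δ - μ * (σ^2/2 - μ)) := by
    field_simp
    ring
  linarith [h2.symm ▸ sub_neg.mpr h1]
end

section
/- Let n > 1 and λ > 0, and let a be a real number with 0 < a < n/(n−1). Then for every l > 0, a·(e^{−λl} − e^{−λnl}) < 1 − e^{−λnl}. -/
theorem stmt_6 (lam n a : ℝ) (hlam : 0 < lam) (hn : 1 < n)
    (ha0 : 0 < a) (ha : a < n / (n - 1)) :
    ∀ l : ℝ, 0 < l →
      a * (Real.exp (-lam * l) - Real.exp (-lam * n * l)) <
        1 - Real.exp (-lam * n * l) := by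
  intro l hl
  set x := Real.exp (-lam * l) with hxdef
  have hx0 : 0 < x := Real.exp_pos _
  have hx1 : x < 1 := by
    apply Real.exp_lt_one_iff.mpr; nlinarith
  have hxn : Real.exp (-lam * n * l) = x ^ n := by
    rw [hxdef, ← Real.exp_mul]; ring_nf
  rw [hxn]
  have key : 1 + n * (x - 1) ≤ x ^ n := by
    have := one_add_mul_self_le_rpow_one_add (by linarith : (-1:ℝ) ≤ x - 1) hn.le
    simpa using this
  have hlt : x ^ n < x := by
    have := Real.rpow_lt_rpow_of_exponent_gt hx0 hx1 hn
    simpa using this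
  have hn1 : 0 < n - 1 := by linarith
  have ha' : a * (n - 1) < n := by
    rw [div_eq_mul_inv] at ha
    nlinarith [mul_lt_mul_of_pos_right ha hn1, mul_inv_cancel₀ (ne_of_gt hn1)]
  have hpos : 0 < x - x ^ n := sub_pos.mpr hlt
  have h1 : a * (x - x ^ n) * (n - 1) < n * (x - x ^ n) := by
    nlinarith [mul_lt_mul_of_pos_right ha' hpos]
  have h2 : n * (x - x ^ n) ≤ (n - 1) * (1 - x ^ n) := by nlinarith [key]
  nlinarith [h1, h2]
end

section
/- Under the standing assumptions, for every γ > 0: 0 < η/(η+γ) − (m_γ/(δ+γ))·(δ/n − γμ/(η+γ)) < δ/(δ+γ) − (m_γ/(δ+γ))·(δ/n + γb/(δ+γ)). -/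
set_option maxHeartbeats 1000000


theorem stmt_10 (σ μ δ η b γ n m : ℝ) (hσ : σ ≠ 0) (hμ : 0 < μ) (hδ : μ < δ)
    (hη : η = δ - μ) (hγ : 0 < γ) (hb : b = σ^2/2 - μ) (hn : 0 < n)
    (hroot : σ^2/2 * n^2 - b * n - δ = 0)
    (hm : m < 0) (hmroot : σ^2/2 * m^2 - b * m - (δ + γ) = 0) :
    0 < η/(η+γ) - m/(δ+γ) * (δ/n - γ*μ/(η+γ)) ∧
      η/(η+γ) - m/(δ+γ) * (δ/n - γ*μ/(η+γ)) <
        δ/(δ+γ) - m/(δ+γ) * (δ/n + γ*b/(δ+γ)) := by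
  have hσ2 : 0 < σ^2 := by positivity
  have hηpos : 0 < η := by rw [hη]; linarith
  have hD1 : 0 < η + γ := by linarith
  have hD2 : 0 < δ + γ := by linarith
  -- δ = σ²/2 n(n-1) + μ n, hence n > 1 and μ n < δ
  have hδeq : δ = σ^2/2 * n * (n - 1) + μ * n := by
    rw [hb] at hroot; nlinarith [hroot]
  have hn1 : 1 < n := by
    by_contra h
    push_neg at h
    have h1 : σ^2/2 * n * (n-1) ≤ 0 := by nlinarith [mul_nonneg (le_of_lt hn) (by linarith : (0:ℝ) ≤ 1 - n)]
    nlinarith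
  have hμn : μ * n < δ := by
    nlinarith [mul_pos (mul_pos hσ2 hn) (show (0:ℝ) < n - 1 by linarith)]
  have hX : 0 < δ/n - γ*μ/(η+γ) := by
    have h1 : μ < δ/n := by rw [lt_div_iff₀ hn]; linarith
    have h2 : γ*μ/(η+γ) < μ := by
      rw [div_lt_iff₀ hD1]; nlinarith
    linarith
  have hfirst : 0 < η/(η+γ) - m/(δ+γ) * (δ/n - γ*μ/(η+γ)) := by
    have h1 : 0 < η/(η+γ) := by positivity
    have h2 : m/(δ+γ) * (δ/n - γ*μ/(η+γ)) < 0 :=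
      mul_neg_of_neg_of_pos (div_neg_of_neg_of_pos hm hD2) hX
    linarith
  refine ⟨hfirst, ?_⟩
  have hkeypos : 0 < μ*(δ+γ) + b*(η+γ) := by
    have : μ*(δ+γ) + b*(η+γ) = σ^2/2*(η+γ) + μ^2 := by rw [hb, hη]; ring
    rw [this]; positivity
  have hkey : m * (μ*(δ+γ) + b*(η+γ)) < μ*(δ+γ) := by
    have := mul_neg_of_neg_of_pos hm hkeypos
    nlinarith
  have hid : δ/(δ+γ) - m/(δ+γ)*(γ*b/(δ+γ)) - (η/(η+γ) + m/(δ+γ)*(γ*μ/(η+γ))) =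
      γ*(μ*(δ+γ) - m*(μ*(δ+γ) + b*(η+γ)))/((η+γ)*(δ+γ)^2) := by
    have h1 : (η+γ) ≠ 0 := ne_of_gt hD1
    have h2 : (δ+γ) ≠ 0 := ne_of_gt hD2
    subst hη
    field_simp
    ring
  have hpos : 0 < γ*(μ*(δ+γ) - m*(μ*(δ+γ) + b*(η+γ)))/((η+γ)*(δ+γ)^2) := by
    apply div_pos
    · have : 0 < μ*(δ+γ) - m*(μ*(δ+γ) + b*(η+γ)) := by linarith
      positivity
    · positivity
  have hmain : η/(η+γ) + m/(δ+γ)*(γ*μ/(η+γ)) < δ/(δ+γ) - m/(δ+γ)*(γ*b/(δ+γ)) := by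
    linarith
  rw [mul_sub, mul_add]
  linarith [hmain]
end

section
/- Define a_γ = [δ − m_γ(δ/n + γb/(δ+γ))]/(δ+γ) divided by [η/(η+γ) − (m_γ/(δ+γ))(δ/n − γμ/(η+γ))]. Then for every γ > 0, 1 < a_γ < n/(n−1). -/
lemma aux_11 (s μ δ γ n m : ℝ) (hs : 0 < s) (hμ : 0 < μ) (hδ : μ < δ)
    (hγ : 0 < γ) (hn1 : 1 < n) (hm : m < 0)
    (hδ2 : δ = s*n^2 - (s-μ)*n)
    (hγ2 : γ = s*m^2 - (s-μ)*m - (s*n^2 - (s-μ)*n)) :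
    1 < ((δ - m * (δ/n + γ*(s-μ)/(δ+γ))) / (δ+γ)) /
        ((δ-μ)/(δ-μ+γ) - m/(δ+γ) * (δ/n - γ*μ/(δ-μ+γ))) ∧
    ((δ - m * (δ/n + γ*(s-μ)/(δ+γ))) / (δ+γ)) /
        ((δ-μ)/(δ-μ+γ) - m/(δ+γ) * (δ/n - γ*μ/(δ-μ+γ))) < n / (n-1) := by
  have hn : (0:ℝ) < n := by linarith
  have hn1' : (0:ℝ) < n - 1 := by linarith
  have hδγ : (0:ℝ) < δ + γ := by linarith
  have hηγ : (0:ℝ) < δ - μ + γ := by linarith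
  have hδγ' : (δ + γ) ≠ 0 := ne_of_gt hδγ
  have hηγ' : (δ - μ + γ) ≠ 0 := ne_of_gt hηγ
  have hn' : n ≠ 0 := ne_of_gt hn
  -- μ*n < δ
  have hμn : μ * n < δ := by
    nlinarith [mul_pos hs (mul_pos hn hn1')]
  -- D expressed with common denominator
  have key0 : (δ-μ)/(δ-μ+γ) - m/(δ+γ) * (δ/n - γ*μ/(δ-μ+γ)) =
      ((δ-μ)*n*(δ+γ) - m*(δ*(δ-μ+γ) - γ*μ*n)) / (n*(δ-μ+γ)*(δ+γ)) := by
    field_simp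
  have hX : 0 < δ*(δ-μ+γ) - γ*μ*n := by
    nlinarith [mul_pos (show (0:ℝ) < δ by linarith) (show (0:ℝ) < δ - μ by linarith),
      mul_pos hγ (show (0:ℝ) < δ - μ*n by linarith)]
  have hF : 0 < (δ-μ)*n*(δ+γ) - m*(δ*(δ-μ+γ) - γ*μ*n) := by
    nlinarith [mul_pos (mul_pos (show (0:ℝ) < δ - μ by linarith) hn) hδγ,
      mul_pos (show (0:ℝ) < -m by linarith) hX]
  have hD : 0 < (δ-μ)/(δ-μ+γ) - m/(δ+γ) * (δ/n - γ*μ/(δ-μ+γ)) := by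
    rw [key0]
    exact div_pos hF (by positivity)
  -- N - D
  have hE : 0 < μ*(δ+γ) - m*μ^2 - m*s*(δ-μ+γ) := by
    nlinarith [mul_pos hμ hδγ, mul_pos (show (0:ℝ) < -m by linarith) (mul_pos hμ hμ),
      mul_pos (show (0:ℝ) < -m by linarith) (mul_pos hs hηγ)]
  have key1 : (δ - m * (δ/n + γ*(s-μ)/(δ+γ))) / (δ+γ) -
      ((δ-μ)/(δ-μ+γ) - m/(δ+γ) * (δ/n - γ*μ/(δ-μ+γ))) =
      γ*(μ*(δ+γ) - m*μ^2 - m*s*(δ-μ+γ)) / ((δ+γ)^2*(δ-μ+γ)) := by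
    field_simp
    ring
  have hND : ((δ-μ)/(δ-μ+γ) - m/(δ+γ) * (δ/n - γ*μ/(δ-μ+γ))) <
      (δ - m * (δ/n + γ*(s-μ)/(δ+γ))) / (δ+γ) := by
    have h2 : 0 < γ*(μ*(δ+γ) - m*μ^2 - m*s*(δ-μ+γ)) / ((δ+γ)^2*(δ-μ+γ)) :=
      div_pos (mul_pos hγ hE) (by positivity)
    linarith [key1]
  constructor
  · exact (one_lt_div hD).mpr hND
  · rw [div_lt_div_iff₀ hD hn1']
    have key2 : n * ((δ-μ)/(δ-μ+γ) - m/(δ+γ) * (δ/n - γ*μ/(δ-μ+γ))) -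
        ((δ - m * (δ/n + γ*(s-μ)/(δ+γ))) / (δ+γ)) * (n-1) =
        (s^3*n*m^2*(1-m)*(n-1)*(n-m)) / ((δ+γ)^2*(δ-μ+γ)) := by
      field_simp
      rw [hδ2, hγ2]
      ring
    have h3 : 0 < (s^3*n*m^2*(1-m)*(n-1)*(n-m)) / ((δ+γ)^2*(δ-μ+γ)) := by
      have hm2 : 0 < m^2 := pow_two_pos_of_ne_zero (ne_of_lt hm)
      have : 0 < s^3*n*m^2*(1-m)*(n-1)*(n-m) :=
        mul_pos (mul_pos (mul_pos (mul_pos (mul_pos (pow_pos hs 3) hn) hm2)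
          (by linarith : (0:ℝ) < 1 - m)) hn1') (by linarith : (0:ℝ) < n - m)
      exact div_pos this (mul_pos (pow_pos hδγ 2) hηγ)
    linarith [key2]

theorem stmt_11 (σ μ δ η b γ n m a : ℝ) (hσ : σ ≠ 0) (hμ : 0 < μ) (hδ : μ < δ)
    (hη : η = δ - μ) (hγ : 0 < γ) (hb : b = σ^2/2 - μ) (hn : 0 < n)
    (hroot : σ^2/2 * n^2 - b * n - δ = 0)
    (hm : m < 0) (hmroot : σ^2/2 * m^2 - b * m - (δ + γ) = 0)
    (ha : a = ((δ - m * (δ/n + γ*b/(δ+γ))) / (δ+γ)) /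
        (η/(η+γ) - m/(δ+γ) * (δ/n - γ*μ/(η+γ)))) :
    1 < a ∧ a < n / (n - 1) := by
  subst ha hη hb
  have hs : 0 < σ^2/2 := by
    have h1 : 0 < σ^2 := lt_of_le_of_ne (sq_nonneg σ) (Ne.symm (pow_ne_zero 2 hσ))
    linarith
  have hn1 : 1 < n := by
    by_contra h
    push_neg at h
    nlinarith [mul_nonneg (mul_pos hs hn).le (by linarith : (0:ℝ) ≤ 1 - n),
      mul_nonneg hμ.le (by linarith : (0:ℝ) ≤ 1 - n)]
  have hδ2 : δ = σ^2/2*n^2 - (σ^2/2-μ)*n := by linarith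
  have hγ2 : γ = σ^2/2*m^2 - (σ^2/2-μ)*m - (σ^2/2*n^2 - (σ^2/2-μ)*n) := by linarith
  exact aux_11 (σ^2/2) μ δ γ n m hs hμ hδ hγ hn1 hm hδ2 hγ2
end

section
/- With a_γ as defined, a_γ → n/(n−1) as γ → ∞. -/
open Filter Real

private lemma aux_ratio (c d : ℝ) :
    Filter.Tendsto (fun x : ℝ => (c + x) / (d + x)) Filter.atTop (nhds 1) := by
  have hd : Tendsto (fun x : ℝ => d + x) atTop atTop :=
    tendsto_atTop_add_const_left atTop d tendsto_id
  have h0 : Tendsto (fun x : ℝ => (c - d) * (d + x)⁻¹) atTop (nhds 0) := by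
    simpa using (hd.inv_tendsto_atTop.const_mul (c - d))
  have h1 : Tendsto (fun x : ℝ => 1 + (c - d) * (d + x)⁻¹) atTop (nhds 1) := by
    simpa using (tendsto_const_nhds (x := (1:ℝ)) (f := atTop)).add h0
  refine Tendsto.congr' ?_ h1
  filter_upwards [hd.eventually_ne_atTop 0] with x hx
  field_simp
  ring

theorem stmt_13 (σ μ δ η b n : ℝ) (m a : ℝ → ℝ) (hσ : σ ≠ 0) (hμ : 0 < μ)
    (hδ : μ < δ) (hη : η = δ - μ) (hb : b = σ^2/2 - μ) (hn : 0 < n)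
    (hroot : σ^2/2 * n^2 - b * n - δ = 0)
    (hm : ∀ γ : ℝ, m γ = (b - Real.sqrt (b^2 + 2 * σ^2 * (δ + γ))) / σ^2)
    (ha : ∀ γ : ℝ, a γ = ((δ - m γ * (δ/n + γ*b/(δ+γ))) / (δ+γ)) /
        (η/(η+γ) - m γ/(δ+γ) * (δ/n - γ*μ/(η+γ)))) :
    Filter.Tendsto a Filter.atTop (nhds (n / (n - 1))) := by
  have hσ2 : (0:ℝ) < σ^2 := by positivity
  have hn0 : n ≠ 0 := ne_of_gt hn
  have hn1 : n ≠ 1 := by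
    intro h
    rw [h] at hroot
    rw [hb] at hroot
    linarith
  have hδμn : δ - μ * n ≠ 0 := by
    have h1 : δ - μ * n = σ^2 * n * (n-1) / 2 := by
      rw [hb] at hroot; linarith [hroot]
    rw [h1]
    have hn1' : n - 1 ≠ 0 := sub_ne_zero.mpr hn1
    positivity
  -- -m tends to atTop
  have hMin : Tendsto (fun γ : ℝ => b^2 + 2 * σ^2 * (δ + γ)) atTop atTop := by
    apply tendsto_atTop_add_const_left
    exact Tendsto.const_mul_atTop (by positivity) (tendsto_atTop_add_const_left atTop δ tendsto_id)
  have hM : Tendsto (fun γ : ℝ => -m γ) atTop atTop := by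
    have hsqrt : Tendsto Real.sqrt atTop atTop := by
      rw [tendsto_atTop_atTop]
      intro C
      refine ⟨max (C^2) 0, fun x hx => ?_⟩
      have h2 : Real.sqrt (C^2) ≤ Real.sqrt x :=
        Real.sqrt_le_sqrt (le_trans (le_max_left _ _) hx)
      calc C ≤ |C| := le_abs_self C
        _ = Real.sqrt (C^2) := (Real.sqrt_sq_eq_abs C).symm
        _ ≤ Real.sqrt x := h2
    have h1 : Tendsto (fun γ : ℝ => Real.sqrt (b^2 + 2 * σ^2 * (δ + γ))) atTop atTop :=
      hsqrt.comp hMin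
    have h2 : Tendsto (fun γ : ℝ => (Real.sqrt (b^2 + 2 * σ^2 * (δ + γ)) + -b) / σ^2)
        atTop atTop := (tendsto_atTop_add_const_right atTop (-b) h1).atTop_div_const hσ2
    refine h2.congr fun γ => ?_
    rw [hm γ]; ring
  have hinv : Tendsto (fun γ : ℝ => (-m γ)⁻¹) atTop (nhds 0) := hM.inv_tendsto_atTop
  -- numerator limit
  have hNf : Tendsto (fun γ : ℝ => δ * (-m γ)⁻¹ + δ/n + b * (γ/(δ+γ))) atTop
      (nhds (δ/n + b)) := by
    have h2 : Tendsto (fun γ : ℝ => γ/(δ+γ)) atTop (nhds 1) := by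
      have := aux_ratio 0 δ
      simpa using this
    have := ((hinv.const_mul δ).add (tendsto_const_nhds (x := δ/n))).add (h2.const_mul b)
    simpa using this
  -- denominator limit
  have hDf : Tendsto (fun γ : ℝ => η * ((δ+γ)/(η+γ)) * (-m γ)⁻¹ + (δ/n - μ * (γ/(η+γ))))
      atTop (nhds (δ/n - μ)) := by
    have h3 : Tendsto (fun γ : ℝ => γ/(η+γ)) atTop (nhds 1) := by
      have := aux_ratio 0 η
      simpa using this
    have h4 : Tendsto (fun γ : ℝ => η * ((δ+γ)/(η+γ)) * (-m γ)⁻¹) atTop (nhds 0) := by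
      have := (((aux_ratio δ η).const_mul η).mul hinv)
      simpa using this
    have := h4.add ((tendsto_const_nhds (x := δ/n)).sub (h3.const_mul μ))
    simpa using this
  have hden_ne : δ/n - μ ≠ 0 := by
    have h1 : δ/n - μ = (δ - μ * n)/n := by field_simp
    rw [h1]
    exact div_ne_zero hδμn hn0
  have hval : (δ/n + b)/(δ/n - μ) = n/(n-1) := by
    rw [div_eq_div_iff hden_ne (sub_ne_zero.mpr hn1)]
    field_simp
    nlinarith [hroot]
  have hlim : Tendsto (fun γ : ℝ => (δ * (-m γ)⁻¹ + δ/n + b * (γ/(δ+γ))) /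
      (η * ((δ+γ)/(η+γ)) * (-m γ)⁻¹ + (δ/n - μ * (γ/(η+γ))))) atTop
      (nhds (n/(n-1))) := by
    have := hNf.div hDf hden_ne
    rwa [hval] at this
  -- eventual equality
  have key : ∀ᶠ γ in atTop, a γ = (δ * (-m γ)⁻¹ + δ/n + b * (γ/(δ+γ))) /
      (η * ((δ+γ)/(η+γ)) * (-m γ)⁻¹ + (δ/n - μ * (γ/(η+γ)))) := by
    filter_upwards [eventually_gt_atTop (0:ℝ)] with γ hγ
    have hδγ : (0:ℝ) < δ + γ := by linarith
    have hηγ : (0:ℝ) < η + γ := by rw [hη]; linarith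
    have hsq : b < Real.sqrt (b^2 + 2 * σ^2 * (δ + γ)) := by
      have h1 : Real.sqrt (b^2) < Real.sqrt (b^2 + 2 * σ^2 * (δ + γ)) := by
        apply Real.sqrt_lt_sqrt (sq_nonneg b)
        nlinarith
      calc b ≤ |b| := le_abs_self b
        _ = Real.sqrt (b^2) := (Real.sqrt_sq_eq_abs b).symm
        _ < _ := h1
    have hmlt : m γ < 0 := by
      rw [hm γ]
      apply div_neg_of_neg_of_pos (by linarith) hσ2
    have hmne : m γ ≠ 0 := ne_of_lt hmlt
    have hmne' : -m γ ≠ 0 := neg_ne_zero.mpr hmne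
    have hc : (δ+γ) * (-m γ)⁻¹ ≠ 0 :=
      mul_ne_zero (ne_of_gt hδγ) (inv_ne_zero hmne')
    rw [ha γ]
    rw [← mul_div_mul_right _ _ hc]
    congr 1
    · field_simp
      ring
    · field_simp
      ring
  exact Filter.Tendsto.congr' (Filter.EventuallyEq.symm key) hlim
end
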